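/- With α* = ρ²/(ρ² + (d/N)σ²), if ρ² > 0 and σ² > 0 then E(f_{α*}) < E(f_ℓ) and E(f_{α*}) < E(f_g), i.e., the optimally interpolated model strictly beats both the purely local model (α=1) and the purely global model (α=0). -/

import Mathlib

/-!
Writing `s = (d/N)σ²`, the error splits as
`E α = ((M-1)/M) (α² s + (1-α)² ρ²) + s/M`,
so only the quadratic `α² s + (1-α)² ρ²` matters. It equals `s` at `α = 1` and `ρ²` at `α = 0`,
while at the inverse-variance weight `α* = ρ²/(ρ² + s)` it equals `ρ² s/(ρ² + s)`, which is
strictly below both `s` and `ρ²`.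
-/

theorem sq_mul_add_one_sub_sq_mul_eq_of_eq_div {r s a : ℝ} (hrs : r + s ≠ 0)
    (ha : a = r / (r + s)) : a ^ 2 * s + (1 - a) ^ 2 * r = r * s / (r + s) := by
  subst ha
  field_simp
  ring

theorem mul_div_add_lt_right {r s : ℝ} (hr : 0 < r) (hs : 0 < s) : r * s / (r + s) < s := by
  rw [div_lt_iff₀ (by positivity)]
  nlinarith [mul_pos hs hs]

theorem mul_div_add_lt_left {r s : ℝ} (hr : 0 < r) (hs : 0 < s) : r * s / (r + s) < r := by
  simpa only [mul_comm r s, add_comm r s] using mul_div_add_lt_right hs hr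

/-- With `α* = ρ²/(ρ² + (d/N)σ²)`, if `ρ² > 0` and `σ² > 0` then the optimally
interpolated model strictly beats both the purely local model (`α = 1`, error
`(d/N)σ²`) and the purely global model (`α = 0`, error `((M-1)/M)ρ² + (d/(MN))σ²`). -/
theorem interpolation_beats_extremes
    (d N : ℝ) (M : ℕ) (hd : 0 < d) (hN : 0 < N) (hM : 2 ≤ M)
    (ρ2 σ2 : ℝ) (hρ2 : 0 < ρ2) (hσ2 : 0 < σ2)
    (E : ℝ → ℝ)
    (hE : ∀ α, E α = α ^ 2 * (d / N) * σ2
      + (1 - α) ^ 2 * (((M : ℝ) - 1) / M) * ρ2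
      + (1 - α ^ 2) * (d / (M * N)) * σ2)
    (αstar : ℝ) (hαstar : αstar = ρ2 / (ρ2 + (d / N) * σ2)) :
    E αstar < E 1 ∧ E αstar < E 0 := by
  set s := d / N * σ2
  have hs : 0 < s := by positivity
  have hM1 : (1 : ℝ) < M := by exact_mod_cast hM
  have hc : 0 < ((M : ℝ) - 1) / M := div_pos (by linarith) (by linarith)
  have hsplit : ∀ α, E α = ((M : ℝ) - 1) / M * (α ^ 2 * s + (1 - α) ^ 2 * ρ2) + s / M := by
    intro α
    rw [hE]
    simp only [s]
    field_simp
    ring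
  have hopt := sq_mul_add_one_sub_sq_mul_eq_of_eq_div (by positivity) hαstar
  rw [hsplit, hsplit, hsplit, hopt]
  constructor
  · gcongr
    simpa using mul_div_add_lt_right hρ2 hs
  · gcongr
    simpa using mul_div_add_lt_left hρ2 hs
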